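/- arXiv:1211.4065 — 2 statements merged into one kernel-verified Lean document; each statement's English description precedes it below -/
import Mathlib

section
/- There exist a constant c > 0 and a family of rotations O_m ∈ SO(3), indexed by m ∈ (ℤ/2ℤ)⁴ (so 16 rotations), with O₀ equal to the identity, such that for all f, f' ∈ F and all m, m' ∈ (ℤ/2ℤ)⁴, one has |O_m f + O_{m'} f'| ≥ c unless f' = −f and m' = m. -/
noncomputable section

open Matrix

/-- The golden ratio φ = (1+√5)/2. -/
def gr : ℝ := (1 + Real.sqrt 5) / 2

/-- The normalizing factor √(1+φ²). -/
def dn : ℝ := Real.sqrt (1 + gr ^ 2)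

/-- The six unit face normals of a regular dodecahedron, one from each
antipodal pair: (0,1,±φ), (1,±φ,0), (±φ,0,1), each divided by √(1+φ²). -/
def Fhat : Fin 6 → (Fin 3 → ℝ) :=
  ![dn⁻¹ • ![(0:ℝ), 1, gr], dn⁻¹ • ![(0:ℝ), 1, -gr], dn⁻¹ • ![(1:ℝ), gr, 0],
    dn⁻¹ • ![(1:ℝ), -gr, 0], dn⁻¹ • ![gr, 0, 1], dn⁻¹ • ![-gr, 0, 1]]

/-- The full set of 12 unit face normals of the regular dodecahedron. -/
def Fset : Set (Fin 3 → ℝ) := {f | ∃ i : Fin 6, f = Fhat i ∨ f = -Fhat i}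

/-- Euclidean norm on ℝ³. -/
def enorm2 (x : Fin 3 → ℝ) : ℝ := Real.sqrt (∑ i, (x i) ^ 2)

/-- Euclidean inner product on ℝ³. -/
def dotp (x y : Fin 3 → ℝ) : ℝ := ∑ i, x i * y i

/-!
Take `O_m = R ^ k(m)`, where `R` is the rotation about the `z`-axis with `cos θ = 3/5` and
`k(m) ∈ {0, …, 15}` is the number with binary digits `m`. If `O_m f + O_{m'} f' = 0`, then
`R ^ |k(m) - k(m')|` maps a face normal to a face normal, and no power `R ^ j` with `0 < j < 16`
does so. Scaled by `5 ^ j · 2√(1 + φ²)`, this becomes a statement about vectors over `ℤ[√5]`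
(the entries of `R` have denominator `5`, and `2φ = 1 + √5`), settled by exact computation.
Only finitely many sums `O_m f + O_{m'} f'` occur and none of the allowed ones vanishes, so their
norms are bounded below by some `c > 0`.
-/

theorem Set.Finite.exists_pos_forall_le {α : Type*} {s : Set α} (hs : s.Finite) {g : α → ℝ}
    (hg : ∀ x ∈ s, 0 < g x) : ∃ c, 0 < c ∧ ∀ x ∈ s, c ≤ g x := by
  rcases s.eq_empty_or_nonempty with rfl | hne
  · exact ⟨1, one_pos, by simp⟩
  · obtain ⟨x₀, hx₀, hmin⟩ := Set.exists_min_image s g hs hne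
    exact ⟨g x₀, hg x₀ hx₀, hmin⟩

theorem Matrix.mulVec_injective_of_mem_orthogonalGroup {n R : Type*} [Fintype n] [DecidableEq n]
    [CommRing R] {A : Matrix n n R} (hA : A ∈ Matrix.orthogonalGroup n R) :
    Function.Injective A.mulVec := fun x y hxy => by
  simpa [mulVec_mulVec, (Matrix.mem_orthogonalGroup_iff' n R).mp hA] using
    congrArg (Aᵀ *ᵥ ·) hxy

theorem RingHom.comp_mulVec {R S m n : Type*} [Fintype n] [NonAssocSemiring R]
    [NonAssocSemiring S] (f : R →+* S) (M : Matrix m n R) (v : n → R) :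
    f ∘ (M *ᵥ v) = M.map f *ᵥ (f ∘ v) :=
  funext (f.map_mulVec M v)

theorem enorm2_pos {x : Fin 3 → ℝ} (hx : x ≠ 0) : 0 < enorm2 x := by
  have h : enorm2 x = ‖WithLp.toLp 2 x‖ := by simp [enorm2, EuclideanSpace.norm_eq]
  rw [h, norm_pos_iff]
  simpa using hx

theorem dn_pos : 0 < dn := Real.sqrt_pos.2 (by positivity)

def rot : Matrix (Fin 3) (Fin 3) ℝ := !![3/5, -4/5, 0; 4/5, 3/5, 0; 0, 0, 1]

theorem rot_mem_specialOrthogonalGroup : rot ∈ Matrix.specialOrthogonalGroup (Fin 3) ℝ := by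
  rw [Matrix.mem_specialOrthogonalGroup_iff, Matrix.mem_orthogonalGroup_iff']
  constructor
  · ext i j
    fin_cases i <;> fin_cases j <;> simp [rot, Matrix.mul_apply, Fin.sum_univ_three] <;> norm_num
  · simp [rot, Matrix.det_fin_three]
    norm_num

def toRealSqrt5 : ℤ√5 →+* ℝ := Zsqrtd.toReal (by norm_num)

theorem toRealSqrt5_injective : Function.Injective toRealSqrt5 :=
  Zsqrtd.toReal_injective _ fun n hn =>
    (Int.prime_iff_natAbs_prime.mpr (by norm_num) : Prime (5 : ℤ)).not_isSquare ⟨n, hn⟩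

def scaledRot : Matrix (Fin 3) (Fin 3) (ℤ√5) := !![3, -4, 0; 4, 3, 0; 0, 0, 5]

def scaledFhat : Fin 6 → Fin 3 → ℤ√5 :=
  ![![0, 2, 1 + Zsqrtd.sqrtd], ![0, 2, -1 - Zsqrtd.sqrtd], ![2, 1 + Zsqrtd.sqrtd, 0],
    ![2, -1 - Zsqrtd.sqrtd, 0], ![1 + Zsqrtd.sqrtd, 0, 2], ![-1 - Zsqrtd.sqrtd, 0, 2]]

theorem scaledRot_pow_mulVec_scaledFhat_ne : ∀ j : Fin 16, j ≠ 0 → ∀ (i i' : Fin 6) (ε : ℤˣ),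
    scaledRot ^ (j : ℕ) *ᵥ scaledFhat i ≠ (5 ^ (j : ℕ) * (ε : ℤ√5)) • scaledFhat i' := by
  decide

theorem rot_eq_smul_map_scaledRot : rot = (5 : ℝ)⁻¹ • scaledRot.map toRealSqrt5 := by
  ext i j
  fin_cases i <;> fin_cases j <;> norm_num [rot, scaledRot, map_ofNat]

theorem Fhat_eq_smul_comp_scaledFhat (i : Fin 6) :
    Fhat i = (2 * dn)⁻¹ • (toRealSqrt5 ∘ scaledFhat i) := by
  ext k
  fin_cases i <;> fin_cases k <;> simp [Fhat, scaledFhat, toRealSqrt5, gr] <;> ring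

theorem rot_pow_mulVec_Fhat (j : ℕ) (i : Fin 6) :
    rot ^ j *ᵥ Fhat i =
      ((5 : ℝ) ^ j)⁻¹ • (2 * dn)⁻¹ • (toRealSqrt5 ∘ (scaledRot ^ j *ᵥ scaledFhat i)) := by
  rw [rot_eq_smul_map_scaledRot, smul_pow, inv_pow, Fhat_eq_smul_comp_scaledFhat, smul_mulVec,
    mulVec_smul, RingHom.comp_mulVec, ← Matrix.map_pow]

theorem rot_pow_mulVec_Fhat_ne {j : ℕ} (hj₀ : j ≠ 0) (hj : j < 16) (i i' : Fin 6) (ε : ℤˣ) :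
    rot ^ j *ᵥ Fhat i ≠ (ε : ℝ) • Fhat i' := by
  intro h
  refine scaledRot_pow_mulVec_scaledFhat_ne ⟨j, hj⟩ (by simpa [Fin.ext_iff] using hj₀) i i' ε
    (toRealSqrt5_injective.comp_left ?_)
  rw [rot_pow_mulVec_Fhat, Fhat_eq_smul_comp_scaledFhat, smul_comm (ε : ℝ),
    smul_comm _ (2 * dn)⁻¹] at h
  have h' := smul_right_injective _ (inv_ne_zero (mul_pos two_pos dn_pos).ne') h
  rw [inv_smul_eq_iff₀ (by positivity)] at h'
  change toRealSqrt5 ∘ _ = toRealSqrt5 ∘ _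
  rw [h']
  ext k
  simp [map_ofNat, mul_assoc]

theorem neg_mem_Fset {f : Fin 3 → ℝ} (hf : f ∈ Fset) : -f ∈ Fset := by
  obtain ⟨i, rfl | rfl⟩ := hf
  exacts [⟨i, Or.inr rfl⟩, ⟨i, Or.inl (neg_neg _)⟩]

theorem Fset_finite : Fset.Finite :=
  ((Set.finite_range Fhat).union (Set.finite_range (-Fhat))).subset
    fun _ ⟨i, hi⟩ => hi.imp (fun h => ⟨i, h.symm⟩) (fun h => ⟨i, h.symm⟩)

theorem rot_pow_mulVec_notMem_Fset {j : ℕ} (hj₀ : j ≠ 0) (hj : j < 16) {f : Fin 3 → ℝ}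
    (hf : f ∈ Fset) : rot ^ j *ᵥ f ∉ Fset := by
  obtain ⟨i, rfl | rfl⟩ := hf <;> rintro ⟨i', h | h⟩
  · exact rot_pow_mulVec_Fhat_ne hj₀ hj i i' 1 (by simpa using h)
  · exact rot_pow_mulVec_Fhat_ne hj₀ hj i i' (-1) (by simpa using h)
  · exact rot_pow_mulVec_Fhat_ne hj₀ hj i i' (-1)
      (by simpa [mulVec_neg, neg_eq_iff_eq_neg] using h)
  · exact rot_pow_mulVec_Fhat_ne hj₀ hj i i' 1 (by simpa [mulVec_neg] using h)

theorem eq_and_eq_of_rot_pow_mulVec_eq {a b : ℕ} (ha : a < 16) (hb : b < 16)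
    {f g : Fin 3 → ℝ} (hf : f ∈ Fset) (hg : g ∈ Fset) (h : rot ^ a *ᵥ f = rot ^ b *ᵥ g) :
    a = b ∧ f = g := by
  wlog hba : b ≤ a generalizing a b f g
  · exact (this hb ha hg hf h.symm (by omega)).imp Eq.symm Eq.symm
  obtain ⟨j, rfl⟩ := Nat.exists_eq_add_of_le hba
  rw [pow_add, ← mulVec_mulVec] at h
  have hfg := Matrix.mulVec_injective_of_mem_orthogonalGroup
    (pow_mem rot_mem_specialOrthogonalGroup b).1 h
  obtain rfl : j = 0 := by
    by_contra hj
    exact rot_pow_mulVec_notMem_Fset hj (by omega) hf (hfg ▸ hg)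
  simpa using hfg

def rotFamily (m : Fin 4 → ZMod 2) : Matrix (Fin 3) (Fin 3) ℝ :=
  rot ^ (finFunctionFinEquiv m : ℕ)

theorem rotFamily_mem_specialOrthogonalGroup (m : Fin 4 → ZMod 2) :
    rotFamily m ∈ Matrix.specialOrthogonalGroup (Fin 3) ℝ :=
  pow_mem rot_mem_specialOrthogonalGroup _

theorem rotFamily_zero : rotFamily 0 = 1 := by
  rw [rotFamily, show finFunctionFinEquiv (0 : Fin 4 → ZMod 2) = 0 from rfl, Fin.val_zero,
    pow_zero]

theorem rotFamily_mulVec_add_ne_zero {m m' : Fin 4 → ZMod 2} {f f' : Fin 3 → ℝ} (hf : f ∈ Fset)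
    (hf' : f' ∈ Fset) (hne : ¬(f' = -f ∧ m' = m)) :
    rotFamily m *ᵥ f + rotFamily m' *ᵥ f' ≠ 0 := by
  intro h
  obtain ⟨hmm', hff'⟩ := eq_and_eq_of_rot_pow_mulVec_eq (finFunctionFinEquiv m).isLt
    (finFunctionFinEquiv m').isLt hf (neg_mem_Fset hf')
    (by rw [mulVec_neg]; exact eq_neg_of_add_eq_zero_left h)
  exact hne ⟨by rw [hff', neg_neg], (finFunctionFinEquiv.injective (Fin.ext hmm')).symm⟩

/-- There exist 16 rotations `O_m ∈ SO(3)`, indexed by `m ∈ (ℤ/2ℤ)⁴`, with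
`O₀ = Id`, such that `|O_m f + O_{m'} f'| ≥ c > 0` for all face normals
`f, f' ∈ F` unless `f' = −f` and `m' = m`. -/
theorem dodecahedron_rotations :
    ∃ (c : ℝ) (O : (Fin 4 → ZMod 2) → Matrix (Fin 3) (Fin 3) ℝ),
      0 < c ∧
      (∀ m, (O m)ᵀ * O m = 1 ∧ (O m).det = 1) ∧
      O 0 = 1 ∧
      (∀ f ∈ Fset, ∀ f' ∈ Fset, ∀ m m' : Fin 4 → ZMod 2,
        ¬(f' = -f ∧ m' = m) →
          c ≤ enorm2 ((O m).mulVec f + (O m').mulVec f')) := by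
  set S : Set (Fin 3 → ℝ) := {x | ∃ f ∈ Fset, ∃ f' ∈ Fset, ∃ m m', ¬(f' = -f ∧ m' = m) ∧
    x = rotFamily m *ᵥ f + rotFamily m' *ᵥ f'}
  have hS : S.Finite := by
    refine (((Set.finite_univ.prod Fset_finite).prod (Set.finite_univ.prod Fset_finite)).image
      fun p => rotFamily p.1.1 *ᵥ p.1.2 + rotFamily p.2.1 *ᵥ p.2.2).subset ?_
    rintro _ ⟨f, hf, f', hf', m, m', -, rfl⟩
    exact ⟨((m, f), (m', f')), ⟨⟨trivial, hf⟩, trivial, hf'⟩, rfl⟩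
  obtain ⟨c, hc, hcS⟩ := hS.exists_pos_forall_le (g := enorm2) <| by
    rintro _ ⟨f, hf, f', hf', m, m', hne, rfl⟩
    exact enorm2_pos (rotFamily_mulVec_add_ne_zero hf hf' hne)
  have hSO := rotFamily_mem_specialOrthogonalGroup
  refine ⟨c, rotFamily, hc, fun m => ⟨(Matrix.mem_orthogonalGroup_iff' _ _).mp (hSO m).1,
    (hSO m).2⟩, rotFamily_zero, fun f hf f' hf' m m' hne => hcS _ ⟨f, hf, f', hf', m, m', hne, rfl⟩⟩
end
end

section
/- (1) The six symmetric matrices { f⊗f : f ∈ F̂ } form a basis of the 6-dimensional vector space Sym²(ℝ³) of symmetric 3×3 real matrices. (2) The six symmetric matrices { Id − f⊗f : f ∈ F̂ } also form a basis of Sym²(ℝ³), where Id is the 3×3 identity matrix. -/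
noncomputable section

open Matrix

/- ### Auxiliary material -/

lemma gr_sq : gr ^ 2 = gr + 1 := by
  have h5 : Real.sqrt 5 ^ 2 = 5 := Real.sq_sqrt (by norm_num)
  unfold gr; linear_combination (1/4) * h5

lemma gr_pos : 0 < gr := by
  have : 0 ≤ Real.sqrt 5 := Real.sqrt_nonneg 5
  unfold gr; linarith

lemma hKpos : (0:ℝ) < 1 + gr ^ 2 := by positivity

lemma hKne : (1 + gr ^ 2 : ℝ) ≠ 0 := ne_of_gt hKpos

lemma dn_mul_self : dn * dn = 1 + gr ^ 2 :=
  Real.mul_self_sqrt (le_of_lt hKpos)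

lemma hdd : dn⁻¹ * dn⁻¹ = (1 + gr ^ 2)⁻¹ := by
  rw [← mul_inv, dn_mul_self]


section vec6
variable {α : Type*} (a b c d e f : α)
lemma vec6_0 : ![a,b,c,d,e,f] 0 = a := rfl
lemma vec6_1 : ![a,b,c,d,e,f] 1 = b := rfl
lemma vec6_2 : ![a,b,c,d,e,f] 2 = c := rfl
lemma vec6_3 : ![a,b,c,d,e,f] 3 = d := rfl
lemma vec6_4 : ![a,b,c,d,e,f] 4 = e := rfl
lemma vec6_5 : ![a,b,c,d,e,f] 5 = f := rfl
end vec6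

section vec3
variable {α : Type*} (a b c : α)
lemma vec3_0 : ![a,b,c] 0 = a := rfl
lemma vec3_1 : ![a,b,c] 1 = b := rfl
lemma vec3_2 : ![a,b,c] 2 = c := rfl
end vec3

/-- Unnormalized face normal vectors. -/
def Wv : Fin 6 → Fin 3 → ℝ :=
  ![![(0:ℝ), 1, gr], ![(0:ℝ), 1, -gr], ![(1:ℝ), gr, 0],
    ![(1:ℝ), -gr, 0], ![gr, 0, 1], ![-gr, 0, 1]]

lemma Fhat_eq (i : Fin 6) : Fhat i = dn⁻¹ • Wv i := by
  fin_cases i <;> rfl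

lemma vecMulVec_smul_smul (c : ℝ) (x y : Fin 3 → ℝ) :
    vecMulVec (c • x) (c • y) = (c * c) • vecMulVec x y := by
  ext a b
  simp [vecMulVec_apply, Pi.smul_apply, smul_eq_mul]
  ring

lemma key (i : Fin 6) :
    vecMulVec (Fhat i) (Fhat i) = (1 + gr ^ 2)⁻¹ • vecMulVec (Wv i) (Wv i) := by
  rw [Fhat_eq, vecMulVec_smul_smul, hdd]

lemma LIQ (c : Fin 6 → ℝ)
    (hc : ∑ i, c i • vecMulVec (Wv i) (Wv i) = 0) : ∀ i, c i = 0 := by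
  have hg : gr ^ 2 = gr + 1 := gr_sq
  have E0 := congrFun (congrFun hc 0) 0
  have E1 := congrFun (congrFun hc 0) 1
  have E2 := congrFun (congrFun hc 0) 2
  have E3 := congrFun (congrFun hc 1) 1
  have E4 := congrFun (congrFun hc 1) 2
  have E5 := congrFun (congrFun hc 2) 2
  simp only [Matrix.sum_apply, Matrix.smul_apply, vecMulVec_apply, Wv,
    Fin.sum_univ_six, smul_eq_mul, Matrix.zero_apply, vec6_0, vec6_1, vec6_2, vec6_3, vec6_4, vec6_5, vec3_0, vec3_1, vec3_2] at E0 E1 E2 E3 E4 E5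
  intro i
  fin_cases i
  · show c 0 = 0
    linear_combination (((-3)/20) + ((1)/20)*gr) * E0 + (((7)/20) + ((-1)/5)*gr) * E3 + (((-1)/2) + ((1)/2)*gr) * E4 + (((1)/10) + ((1)/20)*gr) * E5 + ((((-13)/20) + ((-1)/20)*gr) * c 0 + (((7)/20) + ((-1)/20)*gr) * c 1 + (((-3)/20) + ((1)/5)*gr) * c 2 + (((-3)/20) + ((1)/5)*gr) * c 3 + (((1)/10) + ((-1)/20)*gr) * c 4 + (((1)/10) + ((-1)/20)*gr) * c 5) * hg
  · show c 1 = 0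
    linear_combination (((-3)/20) + ((1)/20)*gr) * E0 + (((7)/20) + ((-1)/5)*gr) * E3 + (((1)/2) + ((-1)/2)*gr) * E4 + (((1)/10) + ((1)/20)*gr) * E5 + ((((7)/20) + ((-1)/20)*gr) * c 0 + (((-13)/20) + ((-1)/20)*gr) * c 1 + (((-3)/20) + ((1)/5)*gr) * c 2 + (((-3)/20) + ((1)/5)*gr) * c 3 + (((1)/10) + ((-1)/20)*gr) * c 4 + (((1)/10) + ((-1)/20)*gr) * c 5) * hg
  · show c 2 = 0
    linear_combination (((7)/20) + ((-1)/5)*gr) * E0 + (((-1)/2) + ((1)/2)*gr) * E1 + (((1)/10) + ((1)/20)*gr) * E3 + (((-3)/20) + ((1)/20)*gr) * E5 + ((((1)/10) + ((-1)/20)*gr) * c 0 + (((1)/10) + ((-1)/20)*gr) * c 1 + (((-13)/20) + ((-1)/20)*gr) * c 2 + (((7)/20) + ((-1)/20)*gr) * c 3 + (((-3)/20) + ((1)/5)*gr) * c 4 + (((-3)/20) + ((1)/5)*gr) * c 5) * hg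
  · show c 3 = 0
    linear_combination (((7)/20) + ((-1)/5)*gr) * E0 + (((1)/2) + ((-1)/2)*gr) * E1 + (((1)/10) + ((1)/20)*gr) * E3 + (((-3)/20) + ((1)/20)*gr) * E5 + ((((1)/10) + ((-1)/20)*gr) * c 0 + (((1)/10) + ((-1)/20)*gr) * c 1 + (((7)/20) + ((-1)/20)*gr) * c 2 + (((-13)/20) + ((-1)/20)*gr) * c 3 + (((-3)/20) + ((1)/5)*gr) * c 4 + (((-3)/20) + ((1)/5)*gr) * c 5) * hg
  · show c 4 = 0
    linear_combination (((1)/10) + ((1)/20)*gr) * E0 + (((-1)/2) + ((1)/2)*gr) * E2 + (((-3)/20) + ((1)/20)*gr) * E3 + (((7)/20) + ((-1)/5)*gr) * E5 + ((((-3)/20) + ((1)/5)*gr) * c 0 + (((-3)/20) + ((1)/5)*gr) * c 1 + (((1)/10) + ((-1)/20)*gr) * c 2 + (((1)/10) + ((-1)/20)*gr) * c 3 + (((-13)/20) + ((-1)/20)*gr) * c 4 + (((7)/20) + ((-1)/20)*gr) * c 5) * hg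
  · show c 5 = 0
    linear_combination (((1)/10) + ((1)/20)*gr) * E0 + (((1)/2) + ((-1)/2)*gr) * E2 + (((-3)/20) + ((1)/20)*gr) * E3 + (((7)/20) + ((-1)/5)*gr) * E5 + ((((-3)/20) + ((1)/5)*gr) * c 0 + (((-3)/20) + ((1)/5)*gr) * c 1 + (((1)/10) + ((-1)/20)*gr) * c 2 + (((1)/10) + ((-1)/20)*gr) * c 3 + (((7)/20) + ((-1)/20)*gr) * c 4 + (((-13)/20) + ((-1)/20)*gr) * c 5) * hg

/-- Coefficients expressing a symmetric matrix in the (unnormalized) basis. -/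
def bco (A : Matrix (Fin 3) (Fin 3) ℝ) : Fin 6 → ℝ :=
  ![((((-3)/20) + ((1)/20)*gr) * A 0 0 + (((7)/20) + ((-1)/5)*gr) * A 1 1 + (((-1)/2) + ((1)/2)*gr) * A 1 2 + (((1)/10) + ((1)/20)*gr) * A 2 2),
    ((((-3)/20) + ((1)/20)*gr) * A 0 0 + (((7)/20) + ((-1)/5)*gr) * A 1 1 + (((1)/2) + ((-1)/2)*gr) * A 1 2 + (((1)/10) + ((1)/20)*gr) * A 2 2),
    ((((7)/20) + ((-1)/5)*gr) * A 0 0 + (((-1)/2) + ((1)/2)*gr) * A 0 1 + (((1)/10) + ((1)/20)*gr) * A 1 1 + (((-3)/20) + ((1)/20)*gr) * A 2 2),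
    ((((7)/20) + ((-1)/5)*gr) * A 0 0 + (((1)/2) + ((-1)/2)*gr) * A 0 1 + (((1)/10) + ((1)/20)*gr) * A 1 1 + (((-3)/20) + ((1)/20)*gr) * A 2 2),
    ((((1)/10) + ((1)/20)*gr) * A 0 0 + (((-1)/2) + ((1)/2)*gr) * A 0 2 + (((-3)/20) + ((1)/20)*gr) * A 1 1 + (((7)/20) + ((-1)/5)*gr) * A 2 2),
    ((((1)/10) + ((1)/20)*gr) * A 0 0 + (((1)/2) + ((-1)/2)*gr) * A 0 2 + (((-3)/20) + ((1)/20)*gr) * A 1 1 + (((7)/20) + ((-1)/5)*gr) * A 2 2)]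

lemma mat3_ext {M N : Matrix (Fin 3) (Fin 3) ℝ}
    (h00 : M 0 0 = N 0 0) (h01 : M 0 1 = N 0 1) (h02 : M 0 2 = N 0 2)
    (h10 : M 1 0 = N 1 0) (h11 : M 1 1 = N 1 1) (h12 : M 1 2 = N 1 2)
    (h20 : M 2 0 = N 2 0) (h21 : M 2 1 = N 2 1) (h22 : M 2 2 = N 2 2) : M = N := by
  ext a b
  fin_cases a <;> fin_cases b <;>
    first | exact h00 | exact h01 | exact h02 | exact h10 | exact h11 | exact h12
          | exact h20 | exact h21 | exact h22

lemma spanQ (A : Matrix (Fin 3) (Fin 3) ℝ)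
    (hq : A 0 1 = A 1 0) (hr : A 0 2 = A 2 0) (ht : A 1 2 = A 2 1) :
    ∑ i, bco A i • vecMulVec (Wv i) (Wv i) = A := by
  have hg : gr ^ 2 = gr + 1 := gr_sq
  apply mat3_ext <;>
    simp only [Matrix.sum_apply, Matrix.smul_apply, vecMulVec_apply, smul_eq_mul,
      Fin.sum_univ_six, bco, Wv, vec6_0, vec6_1, vec6_2, vec6_3, vec6_4, vec6_5,
      vec3_0, vec3_1, vec3_2]
  · linear_combination ((((3)/10) + ((1)/10)*gr) * (A 0 0) + (((-1)/5) + ((1)/10)*gr) * (A 1 1) + (((3)/10) + ((-2)/5)*gr) * (A 2 2)) * hg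
  · linear_combination (((1)) * (A 0 1)) * hg
  · linear_combination (((1)) * (A 0 2)) * hg
  · linear_combination (((1)) * (A 0 1)) * hg + hq
  · linear_combination ((((3)/10) + ((-2)/5)*gr) * (A 0 0) + (((3)/10) + ((1)/10)*gr) * (A 1 1) + (((-1)/5) + ((1)/10)*gr) * (A 2 2)) * hg
  · linear_combination (((1)) * (A 1 2)) * hg
  · linear_combination (((1)) * (A 0 2)) * hg + hr
  · linear_combination (((1)) * (A 1 2)) * hg + ht
  · linear_combination ((((-1)/5) + ((1)/10)*gr) * (A 0 0) + (((3)/10) + ((-2)/5)*gr) * (A 1 1) + (((3)/10) + ((1)/10)*gr) * (A 2 2)) * hg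

lemma sumQ : ∑ i, vecMulVec (Wv i) (Wv i)
    = (2 * (1 + gr ^ 2)) • (1 : Matrix (Fin 3) (Fin 3) ℝ) := by
  apply mat3_ext <;>
    first
      | (simp only [Matrix.sum_apply, Matrix.smul_apply, vecMulVec_apply, smul_eq_mul,
          Fin.sum_univ_six, Wv, vec6_0, vec6_1, vec6_2, vec6_3, vec6_4, vec6_5,
          vec3_0, vec3_1, vec3_2, Matrix.one_apply_eq]
         ring1)
      | (simp only [Matrix.sum_apply, Matrix.smul_apply, vecMulVec_apply, smul_eq_mul,
          Fin.sum_univ_six, Wv, vec6_0, vec6_1, vec6_2, vec6_3, vec6_4, vec6_5,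
          vec3_0, vec3_1, vec3_2]
         simp [Matrix.one_apply]
         try ring)

lemma sumM : ∑ i, vecMulVec (Fhat i) (Fhat i) = (2:ℝ) • (1 : Matrix (Fin 3) (Fin 3) ℝ) := by
  simp only [key]
  have h2 : (1 + gr ^ 2)⁻¹ * (2 * (1 + gr ^ 2)) = 2 := by
    field_simp
  rw [← Finset.smul_sum, sumQ, smul_smul, h2]

lemma LIM (c : Fin 6 → ℝ)
    (hc : ∑ i, c i • vecMulVec (Fhat i) (Fhat i) = 0) : ∀ i, c i = 0 := by
  simp only [key, smul_smul] at hc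
  have h := LIQ (fun i => c i * (1 + gr ^ 2)⁻¹) hc
  intro i
  have hi := h i
  rcases mul_eq_zero.mp hi with h' | h'
  · exact h'
  · exact absurd h' (inv_ne_zero hKne)

lemma spanM (A : Matrix (Fin 3) (Fin 3) ℝ) (hA : A.IsSymm) :
    A ∈ Submodule.span ℝ (Set.range fun i : Fin 6 => vecMulVec (Fhat i) (Fhat i)) := by
  rw [Submodule.mem_span_range_iff_exists_fun]
  refine ⟨fun i => (1 + gr ^ 2) * bco A i, ?_⟩
  have hx : ∀ x : ℝ, (1 + gr ^ 2) * x * (1 + gr ^ 2)⁻¹ = x := by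
    intro x
    rw [mul_comm (1 + gr ^ 2) x, mul_assoc, mul_inv_cancel₀ hKne, mul_one]
  simp only [key, smul_smul, hx]
  exact spanQ A (hA.apply 1 0) (hA.apply 2 0) (hA.apply 2 1)

/-- (1) The six rank-one matrices f⊗f, f ∈ F̂, form a basis of the space of
symmetric 3×3 matrices; (2) so do the six matrices Id − f⊗f. -/
theorem dodecahedron_squares_basis :
    ((∀ i : Fin 6, (vecMulVec (Fhat i) (Fhat i)).IsSymm) ∧
      LinearIndependent ℝ (fun i : Fin 6 => vecMulVec (Fhat i) (Fhat i)) ∧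
      (∀ A : Matrix (Fin 3) (Fin 3) ℝ, A.IsSymm →
        A ∈ Submodule.span ℝ (Set.range fun i : Fin 6 => vecMulVec (Fhat i) (Fhat i)))) ∧
    ((∀ i : Fin 6, ((1 : Matrix (Fin 3) (Fin 3) ℝ) - vecMulVec (Fhat i) (Fhat i)).IsSymm) ∧
      LinearIndependent ℝ
        (fun i : Fin 6 => (1 : Matrix (Fin 3) (Fin 3) ℝ) - vecMulVec (Fhat i) (Fhat i)) ∧
      (∀ A : Matrix (Fin 3) (Fin 3) ℝ, A.IsSymm →
        A ∈ Submodule.span ℝ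
          (Set.range fun i : Fin 6 =>
            (1 : Matrix (Fin 3) (Fin 3) ℝ) - vecMulVec (Fhat i) (Fhat i)))) := by
  have hsymm : ∀ i : Fin 6, (vecMulVec (Fhat i) (Fhat i)).IsSymm := by
    intro i
    show (vecMulVec (Fhat i) (Fhat i))ᵀ = _
    ext a b
    simp [vecMulVec_apply, Matrix.transpose_apply, mul_comm]
  refine ⟨⟨hsymm, ?_, spanM⟩, ⟨?_, ?_, ?_⟩⟩
  · rw [Fintype.linearIndependent_iff]
    exact fun c hc => LIM c hc
  · intro i
    exact Matrix.isSymm_one.sub (hsymm i)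
  · rw [Fintype.linearIndependent_iff]
    intro b hb
    simp only [smul_sub] at hb
    rw [Finset.sum_sub_distrib, ← Finset.sum_smul] at hb
    set S := ∑ i, b i with hS
    have h2 : ∑ i, (b i - S / 2) • vecMulVec (Fhat i) (Fhat i) = 0 := by
      simp only [sub_smul, Finset.sum_sub_distrib]
      rw [← Finset.smul_sum, sumM, smul_smul]
      rw [sub_eq_zero] at hb ⊢
      rw [← hb]
      norm_num
    have h3 := LIM _ h2
    have hbi : ∀ i, b i = S / 2 := fun i => by have := h3 i; linarith
    have hsum6 : S = b 0 + b 1 + b 2 + b 3 + b 4 + b 5 := by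
      rw [hS, Fin.sum_univ_six]
    have hS0 : S = 0 := by
      linarith [hbi 0, hbi 1, hbi 2, hbi 3, hbi 4, hbi 5, hsum6]
    intro i
    rw [hbi i, hS0]
    norm_num
  · intro A hA
    have hsub : Set.range (fun i : Fin 6 => vecMulVec (Fhat i) (Fhat i)) ⊆
        ↑(Submodule.span ℝ (Set.range fun i : Fin 6 =>
          (1 : Matrix (Fin 3) (Fin 3) ℝ) - vecMulVec (Fhat i) (Fhat i))) := by
      rintro _ ⟨i, rfl⟩
      rw [SetLike.mem_coe, Submodule.mem_span_range_iff_exists_fun]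
      refine ⟨fun j => (1/4 : ℝ) - if j = i then 1 else 0, ?_⟩
      have hNsum : ∑ j : Fin 6, ((1 : Matrix (Fin 3) (Fin 3) ℝ)
          - vecMulVec (Fhat j) (Fhat j)) = (4:ℝ) • 1 := by
        rw [Finset.sum_sub_distrib, sumM, Finset.sum_const]
        simp only [Finset.card_univ, Fintype.card_fin]
        module
      have hsplit : ∑ j : Fin 6, ((1/4 : ℝ) - if j = i then 1 else 0) •
          ((1 : Matrix (Fin 3) (Fin 3) ℝ) - vecMulVec (Fhat j) (Fhat j))
          = (1/4 : ℝ) • (∑ j : Fin 6, ((1 : Matrix (Fin 3) (Fin 3) ℝ)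
              - vecMulVec (Fhat j) (Fhat j)))
            - ((1 : Matrix (Fin 3) (Fin 3) ℝ) - vecMulVec (Fhat i) (Fhat i)) := by
        have hterm : ∀ j : Fin 6, ((1/4 : ℝ) - if j = i then 1 else 0) •
            ((1 : Matrix (Fin 3) (Fin 3) ℝ) - vecMulVec (Fhat j) (Fhat j))
            = (1/4 : ℝ) • ((1 : Matrix (Fin 3) (Fin 3) ℝ) - vecMulVec (Fhat j) (Fhat j))
              - (if j = i then (1:ℝ) else 0) •
                ((1 : Matrix (Fin 3) (Fin 3) ℝ) - vecMulVec (Fhat j) (Fhat j)) :=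
          fun j => sub_smul _ _ _
        rw [Finset.sum_congr rfl (fun j _ => hterm j), Finset.sum_sub_distrib,
          ← Finset.smul_sum]
        congr 1
        simp [ite_smul]
      rw [hsplit, hNsum]
      module
    exact Submodule.span_le.mpr hsub (spanM A hA)
end
end
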